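/- arXiv:1709.08076 — 3 statements merged into one kernel-verified Lean document; each statement's English description precedes it below -/
import Mathlib

section
/- Fix M, S, τ₁ > 0, A ∈ [-1,1], γ̄ ∈ ℝ, and a positive integer k with R(k;τ₁) ≥ 0, where R(k;τ₁) = AM⁴ + 2(A²-1)γ̄²Mπ³k + 2M²π²Sτ₁k² + 8π⁴Sk⁴, and set c := Aγ̄π/M + √(R(k;τ₁)/(2kM³π)). For a positive integer l ≠ k, λ_l(c,τ₁) = 0 (with λ defined as λ_j(c,τ₁) = 1 + (M²τ₁/(4π²))j⁻² + ((-c²M³ + 2Acγ̄M²π - γ̄²Mπ²)/(4π³S))j⁻³ + (AM⁴/(8π⁴S))j⁻⁴) if and only if p(l,k;τ₁) = -AM⁴ + 2klπ²S(4(k²+kl+l²)π² + M²τ₁) = 0. -/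
/-!
Clearing denominators, `8π⁴S j⁴ λ_j = 8π⁴S j⁴ + 2π²M²τ₁S j² + 2πN(c) j + AM⁴` is a quartic in `j`
whose only `c`-dependence is the linear coefficient `2πN(c)`. Eliminating it between `j = k` and
`j = l` gives `8π⁴S k l (l³λ_l - k³λ_k) = (l - k) p(l,k;τ₁)`. Completing the square,
`N(Aγπ/M + s) = (A² - 1)γ²Mπ² - M³s²`, which is exactly what makes `c₊` a root of `λ_k`;
hence for `l ≠ k` the eigenvalue `λ_l(c₊)` vanishes iff `p(l,k;τ₁)` does.
-/

open Real

noncomputable section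

namespace Hydroelastic

variable (M S τ₁ A γ : ℝ)

/-- The numerator `N(c)` of the `j⁻³` coefficient of `λ_j(c,τ₁)`. -/
def speedCoeff (c : ℝ) : ℝ :=
  -c ^ 2 * M ^ 3 + 2 * A * c * γ * M ^ 2 * π - γ ^ 2 * M * π ^ 2

def eigenvalue (c j : ℝ) : ℝ :=
  1 + M ^ 2 * τ₁ / (4 * π ^ 2 * j ^ 2) + speedCoeff M A γ c / (4 * π ^ 3 * S * j ^ 3)
    + A * M ^ 4 / (8 * π ^ 4 * S * j ^ 4)

/-- `R(k;τ₁)`. -/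
def speedRadicand (k : ℝ) : ℝ :=
  A * M ^ 4 + 2 * (A ^ 2 - 1) * γ ^ 2 * M * π ^ 3 * k + 2 * M ^ 2 * π ^ 2 * S * τ₁ * k ^ 2
    + 8 * π ^ 4 * S * k ^ 4

def cPlus (k : ℝ) : ℝ :=
  A * γ * π / M + √(speedRadicand M S τ₁ A γ k / (2 * k * M ^ 3 * π))

/-- `p(l,k;τ₁)`. -/
def resonancePoly (k l : ℝ) : ℝ :=
  -A * M ^ 4 + 2 * k * l * π ^ 2 * S * (4 * (k ^ 2 + k * l + l ^ 2) * π ^ 2 + M ^ 2 * τ₁)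

variable {M S τ₁ A γ}

theorem speedCoeff_add (hM : M ≠ 0) (s : ℝ) :
    speedCoeff M A γ (A * γ * π / M + s) = (A ^ 2 - 1) * γ ^ 2 * M * π ^ 2 - M ^ 3 * s ^ 2 := by
  unfold speedCoeff
  field_simp
  ring

theorem eigenvalue_add_eq_zero (hM : M ≠ 0) (hS : S ≠ 0) {k s : ℝ} (hk : k ≠ 0)
    (hs : 2 * k * M ^ 3 * π * s ^ 2 = speedRadicand M S τ₁ A γ k) :
    eigenvalue M S τ₁ A γ (A * γ * π / M + s) k = 0 := by
  rw [speedRadicand] at hs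
  rw [eigenvalue, speedCoeff_add hM]
  field_simp
  linear_combination (-4 : ℝ) * hs

theorem eigenvalue_cPlus_self (hM : 0 < M) (hS : S ≠ 0) {k : ℝ} (hk : 0 < k)
    (hR : 0 ≤ speedRadicand M S τ₁ A γ k) :
    eigenvalue M S τ₁ A γ (cPlus M S τ₁ A γ k) k = 0 := by
  refine eigenvalue_add_eq_zero hM.ne' hS hk.ne' ?_
  rw [sq_sqrt (div_nonneg hR (by positivity))]
  field_simp

theorem eigenvalue_sub_eigenvalue (hS : S ≠ 0) {k l : ℝ} (hk : k ≠ 0) (hl : l ≠ 0) (c : ℝ) :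
    8 * π ^ 4 * S * k * l * (l ^ 3 * eigenvalue M S τ₁ A γ c l - k ^ 3 * eigenvalue M S τ₁ A γ c k)
      = (l - k) * resonancePoly M S τ₁ A k l := by
  unfold eigenvalue resonancePoly
  field_simp
  ring

theorem eigenvalue_eq_zero_iff_resonancePoly (hS : S ≠ 0) {k l c : ℝ} (hk : k ≠ 0) (hl : l ≠ 0)
    (hlk : l ≠ k) (hroot : eigenvalue M S τ₁ A γ c k = 0) :
    eigenvalue M S τ₁ A γ c l = 0 ↔ resonancePoly M S τ₁ A k l = 0 := by
  have key := eigenvalue_sub_eigenvalue (M := M) (τ₁ := τ₁) (A := A) (γ := γ) hS hk hl c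
  rw [hroot, mul_zero, sub_zero] at key
  rw [← mul_eq_zero_iff_left (b := resonancePoly M S τ₁ A k l) (sub_ne_zero.mpr hlk), ← key]
  simp [hS, hk, hl, pi_ne_zero]

end Hydroelastic

end

open Hydroelastic

theorem stmt3_general (M S τ₁ A γ : ℝ) (hM : 0 < M) (hS : 0 < S)
    (k : ℕ) (hk : 1 ≤ k)
    (hR : A * M ^ 4 + 2 * (A ^ 2 - 1) * γ ^ 2 * M * π ^ 3 * (k : ℝ)
        + 2 * M ^ 2 * π ^ 2 * S * τ₁ * (k : ℝ) ^ 2 + 8 * π ^ 4 * S * (k : ℝ) ^ 4 ≥ 0)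
    (c : ℝ)
    (hc : c = A * γ * π / M
        + Real.sqrt ((A * M ^ 4 + 2 * (A ^ 2 - 1) * γ ^ 2 * M * π ^ 3 * (k : ℝ)
            + 2 * M ^ 2 * π ^ 2 * S * τ₁ * (k : ℝ) ^ 2 + 8 * π ^ 4 * S * (k : ℝ) ^ 4)
          / (2 * (k : ℝ) * M ^ 3 * π)))
    (l : ℕ) (hl : 1 ≤ l) (hlk : l ≠ k) :
    (1 + M ^ 2 * τ₁ / (4 * π ^ 2 * (l : ℝ) ^ 2)
        + (-c ^ 2 * M ^ 3 + 2 * A * c * γ * M ^ 2 * π - γ ^ 2 * M * π ^ 2)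
          / (4 * π ^ 3 * S * (l : ℝ) ^ 3)
        + A * M ^ 4 / (8 * π ^ 4 * S * (l : ℝ) ^ 4) = 0)
      ↔ -A * M ^ 4 + 2 * (k : ℝ) * (l : ℝ) * π ^ 2 * S
          * (4 * ((k : ℝ) ^ 2 + (k : ℝ) * (l : ℝ) + (l : ℝ) ^ 2) * π ^ 2 + M ^ 2 * τ₁) = 0 := by
  have hk0 : (0 : ℝ) < k := by exact_mod_cast hk
  obtain rfl : c = cPlus M S τ₁ A γ k := hc
  exact eigenvalue_eq_zero_iff_resonancePoly hS.ne' hk0.ne' (by positivity) (by exact_mod_cast hlk)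
    (eigenvalue_cPlus_self hM hS.ne' hk0 hR)

/-- for `c = c₊(k;τ₁)` and a positive integer `l ≠ k`,
`λ_l(c,τ₁) = 0` iff `p(l,k;τ₁) = 0`. -/
theorem stmt3 (M S τ₁ A γ : ℝ) (hM : 0 < M) (hS : 0 < S) (hτ : 0 < τ₁)
    (hA : A ∈ Set.Icc (-1 : ℝ) 1) (k : ℕ) (hk : 1 ≤ k)
    (hR : A * M ^ 4 + 2 * (A ^ 2 - 1) * γ ^ 2 * M * π ^ 3 * (k : ℝ)
        + 2 * M ^ 2 * π ^ 2 * S * τ₁ * (k : ℝ) ^ 2 + 8 * π ^ 4 * S * (k : ℝ) ^ 4 ≥ 0)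
    (c : ℝ)
    (hc : c = A * γ * π / M
        + Real.sqrt ((A * M ^ 4 + 2 * (A ^ 2 - 1) * γ ^ 2 * M * π ^ 3 * (k : ℝ)
            + 2 * M ^ 2 * π ^ 2 * S * τ₁ * (k : ℝ) ^ 2 + 8 * π ^ 4 * S * (k : ℝ) ^ 4)
          / (2 * (k : ℝ) * M ^ 3 * π)))
    (l : ℕ) (hl : 1 ≤ l) (hlk : l ≠ k) :
    (1 + M ^ 2 * τ₁ / (4 * π ^ 2 * (l : ℝ) ^ 2)
        + (-c ^ 2 * M ^ 3 + 2 * A * c * γ * M ^ 2 * π - γ ^ 2 * M * π ^ 2)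
          / (4 * π ^ 3 * S * (l : ℝ) ^ 3)
        + A * M ^ 4 / (8 * π ^ 4 * S * (l : ℝ) ^ 4) = 0)
      ↔ -A * M ^ 4 + 2 * (k : ℝ) * (l : ℝ) * π ^ 2 * S
          * (4 * ((k : ℝ) ^ 2 + (k : ℝ) * (l : ℝ) + (l : ℝ) ^ 2) * π ^ 2 + M ^ 2 * τ₁) = 0 :=
  stmt3_general M S τ₁ A γ hM hS k hk hR c hc l hl hlk
end

section
/- Fix M, S, τ₁ > 0, A ∈ [-1,1], γ̄ ∈ ℝ. For every positive integer k with R(k;τ₁) ≥ 0, the multiplicity N₀ := |{ j ∈ ℕ₊ : λ_j(c_±(k;τ₁),τ₁) = 0 }| is at most 2, where λ_j(c,τ₁) = 1 + (M²τ₁/(4π²))j⁻² + ((-c²M³ + 2Acγ̄M²π - γ̄²Mπ²)/(4π³S))j⁻³ + (AM⁴/(8π⁴S))j⁻⁴ and c_±(k;τ₁) = Aγ̄π/M ± √(R(k;τ₁)/(2kM³π)). -/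
open Real

/-- Auxiliary: a quartic `8π⁴S x⁴ + 2M²π²Sτ₁ x² + B x + C` with `S,τ₁,M>0`
cannot have three distinct positive roots. -/
lemma stmt4_aux (M S τ₁ B C : ℝ) (hM : 0 < M) (hS : 0 < S) (hτ : 0 < τ₁)
    (x y z : ℝ) (hx : 0 < x) (hy : 0 < y) (hz : 0 < z)
    (hxy : x ≠ y) (hyz : y ≠ z) (hxz : x ≠ z)
    (fx : 8*π^4*S*x^4 + 2*M^2*π^2*S*τ₁*x^2 + B*x + C = 0)
    (fy : 8*π^4*S*y^4 + 2*M^2*π^2*S*τ₁*y^2 + B*y + C = 0)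
    (fz : 8*π^4*S*z^4 + 2*M^2*π^2*S*τ₁*z^2 + B*z + C = 0) : False := by
  have hπ : 0 < π := Real.pi_pos
  have g1 : 8*π^4*S*(x^3+x^2*y+x*y^2+y^3) + 2*M^2*π^2*S*τ₁*(x+y) + B = 0 := by
    have h : (y - x) * (8*π^4*S*(x^3+x^2*y+x*y^2+y^3) + 2*M^2*π^2*S*τ₁*(x+y) + B) = 0 := by
      nlinarith [fx, fy]
    rcases mul_eq_zero.1 h with h | h
    · exact absurd (by linarith [sub_eq_zero.1 h]) hxy
    · exact h
  have g2 : 8*π^4*S*(y^3+y^2*z+y*z^2+z^3) + 2*M^2*π^2*S*τ₁*(y+z) + B = 0 := by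
    have h : (z - y) * (8*π^4*S*(y^3+y^2*z+y*z^2+z^3) + 2*M^2*π^2*S*τ₁*(y+z) + B) = 0 := by
      nlinarith [fy, fz]
    rcases mul_eq_zero.1 h with h | h
    · exact absurd (by linarith [sub_eq_zero.1 h]) hyz
    · exact h
  have h : (z - x) * (8*π^4*S*(x^2+y^2+z^2+x*y+y*z+x*z) + 2*M^2*π^2*S*τ₁) = 0 := by
    nlinarith [g1, g2]
  rcases mul_eq_zero.1 h with h | h
  · exact absurd (by linarith [sub_eq_zero.1 h]) hxz
  · have hsum : 0 < x ^ 2 + y ^ 2 + z ^ 2 + x*y + y*z + x*z := by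
      have := mul_pos hx hy
      have := mul_pos hy hz
      have := mul_pos hx hz
      nlinarith [pow_pos hx 2, pow_pos hy 2, pow_pos hz 2]
    have h1 : 0 < 8*π^4*S := mul_pos (by positivity) hS
    have h2 : 0 < 2*M^2*π^2*S*τ₁ :=
      mul_pos (mul_pos (mul_pos (by positivity) (pow_pos hπ 2)) hS) hτ
    nlinarith [mul_pos h1 hsum]

/-- the zero eigenvalue at `c = c_±(k;τ₁)` has multiplicity at most 2:
the set of positive integers `j` with `λ_j(c_±(k;τ₁),τ₁) = 0` is finite with at most
two elements. -/
theorem stmt4 (M S τ₁ A γ : ℝ) (hM : 0 < M) (hS : 0 < S) (hτ : 0 < τ₁)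
    (hA : A ∈ Set.Icc (-1 : ℝ) 1) (k : ℕ) (hk : 1 ≤ k)
    (hR : A * M ^ 4 + 2 * (A ^ 2 - 1) * γ ^ 2 * M * π ^ 3 * (k : ℝ)
        + 2 * M ^ 2 * π ^ 2 * S * τ₁ * (k : ℝ) ^ 2 + 8 * π ^ 4 * S * (k : ℝ) ^ 4 ≥ 0)
    (e : ℝ) (he : e = 1 ∨ e = -1) (c : ℝ)
    (hc : c = A * γ * π / M
        + e * Real.sqrt ((A * M ^ 4 + 2 * (A ^ 2 - 1) * γ ^ 2 * M * π ^ 3 * (k : ℝ)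
            + 2 * M ^ 2 * π ^ 2 * S * τ₁ * (k : ℝ) ^ 2 + 8 * π ^ 4 * S * (k : ℝ) ^ 4)
          / (2 * (k : ℝ) * M ^ 3 * π))) :
    ({j : ℕ | 1 ≤ j ∧
        1 + M ^ 2 * τ₁ / (4 * π ^ 2 * (j : ℝ) ^ 2)
          + (-c ^ 2 * M ^ 3 + 2 * A * c * γ * M ^ 2 * π - γ ^ 2 * M * π ^ 2)
            / (4 * π ^ 3 * S * (j : ℝ) ^ 3)
          + A * M ^ 4 / (8 * π ^ 4 * S * (j : ℝ) ^ 4) = 0}).Finite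
      ∧ ({j : ℕ | 1 ≤ j ∧
        1 + M ^ 2 * τ₁ / (4 * π ^ 2 * (j : ℝ) ^ 2)
          + (-c ^ 2 * M ^ 3 + 2 * A * c * γ * M ^ 2 * π - γ ^ 2 * M * π ^ 2)
            / (4 * π ^ 3 * S * (j : ℝ) ^ 3)
          + A * M ^ 4 / (8 * π ^ 4 * S * (j : ℝ) ^ 4) = 0}).ncard ≤ 2 := by
  have hπ : 0 < π := Real.pi_pos
  set B : ℝ := 2*π*(-c ^ 2 * M ^ 3 + 2 * A * c * γ * M ^ 2 * π - γ ^ 2 * M * π ^ 2) with hB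
  set T := {j : ℕ | 1 ≤ j ∧
        1 + M ^ 2 * τ₁ / (4 * π ^ 2 * (j : ℝ) ^ 2)
          + (-c ^ 2 * M ^ 3 + 2 * A * c * γ * M ^ 2 * π - γ ^ 2 * M * π ^ 2)
            / (4 * π ^ 3 * S * (j : ℝ) ^ 3)
          + A * M ^ 4 / (8 * π ^ 4 * S * (j : ℝ) ^ 4) = 0} with hT
  -- any j in T gives a root of the quartic
  have hroot : ∀ j ∈ T, 8*π^4*S*(j:ℝ)^4 + 2*M^2*π^2*S*τ₁*(j:ℝ)^2 + B*(j:ℝ) + A*M^4 = 0 := by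
    intro j hj
    obtain ⟨hj1, hj2⟩ := hj
    have hjpos : (0:ℝ) < (j:ℝ) := by exact_mod_cast hj1
    have key : 8*π^4*S*(j:ℝ)^4 + 2*M^2*π^2*S*τ₁*(j:ℝ)^2 + B*(j:ℝ) + A*M^4
        = 8*π^4*S*(j:ℝ)^4 * (1 + M ^ 2 * τ₁ / (4 * π ^ 2 * (j : ℝ) ^ 2)
          + (-c ^ 2 * M ^ 3 + 2 * A * c * γ * M ^ 2 * π - γ ^ 2 * M * π ^ 2)
            / (4 * π ^ 3 * S * (j : ℝ) ^ 3)
          + A * M ^ 4 / (8 * π ^ 4 * S * (j : ℝ) ^ 4)) := by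
      field_simp [hB]
      ring
    rw [key, hj2, mul_zero]
  -- no three distinct elements
  have h3 : ∀ a ∈ T, ∀ b ∈ T, ∀ d ∈ T, a ≠ b → b ≠ d → a ≠ d → False := by
    intro a ha b hb d hd hab hbd had
    have hapos : (0:ℝ) < (a:ℝ) := by exact_mod_cast ha.1
    have hbpos : (0:ℝ) < (b:ℝ) := by exact_mod_cast hb.1
    have hdpos : (0:ℝ) < (d:ℝ) := by exact_mod_cast hd.1
    exact stmt4_aux M S τ₁ B (A*M^4) hM hS hτ (a:ℝ) (b:ℝ) (d:ℝ) hapos hbpos hdpos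
      (by exact_mod_cast hab) (by exact_mod_cast hbd) (by exact_mod_cast had)
      (hroot a ha) (hroot b hb) (hroot d hd)
  by_cases hsub : T.Subsingleton
  · refine ⟨hsub.finite, ?_⟩
    have h1 : T.ncard ≤ 1 := (Set.ncard_le_one hsub.finite).2 fun a ha b hb => hsub ha hb
    omega
  · rw [Set.not_subsingleton_iff] at hsub
    obtain ⟨a, ha, b, hb, hab⟩ := hsub
    have hsubset : T ⊆ {a, b} := by
      intro d hd
      by_contra hdab
      simp only [Set.mem_insert_iff, Set.mem_singleton_iff, not_or] at hdab
      exact h3 a ha b hb d hd hab (fun h => hdab.2 h.symm) (fun h => hdab.1 h.symm)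
    have hfin : T.Finite := Set.Finite.subset ((Set.finite_singleton b).insert a) hsubset
    refine ⟨hfin, ?_⟩
    calc T.ncard ≤ ({a, b} : Set ℕ).ncard := Set.ncard_le_ncard hsubset ((Set.finite_singleton b).insert a)
    _ ≤ 2 := by
      apply le_trans (Set.ncard_insert_le a {b})
      simp [Set.ncard_singleton]
end

section
/- Let A ≥ 0, Ã ≥ 0, c₀ > 0 with 2Ac₀² + Ã > 0. The system -2Ãt₂ + 2At₂c₀² - 4c₀c₁ = 0, 2Ã + 4Ac₀² - 8t₂c₀c₁ = 0 has a real solution (c₁, t₂) if and only if Ac₀² - Ã > 0 or (Ac₀² - Ã < 0 and 2Ac₀² + Ã = 0) — in particular when Ã > Ac₀² and 2Ac₀² + Ã > 0 there is no real solution. -/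
open Real

/-- solvability condition for the second-order Wilton ripple system. -/
theorem stmt9 (A At c₀ : ℝ) (hA : 0 ≤ A) (hAt : 0 ≤ At) (hc₀ : 0 < c₀)
    (hpos : 0 < 2 * A * c₀ ^ 2 + At) :
    (∃ c₁ t₂ : ℝ,
        -2 * At * t₂ + 2 * A * t₂ * c₀ ^ 2 - 4 * c₀ * c₁ = 0
          ∧ 2 * At + 4 * A * c₀ ^ 2 - 8 * t₂ * c₀ * c₁ = 0)
      ↔ (0 < A * c₀ ^ 2 - At
          ∨ (A * c₀ ^ 2 - At < 0 ∧ 2 * A * c₀ ^ 2 + At = 0)) := by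
  constructor
  · rintro ⟨c₁, t₂, h1, h2⟩
    left
    by_contra hle
    push_neg at hle
    nlinarith [mul_self_nonneg t₂, mul_self_nonneg c₁, mul_eq_zero_of_left h1 t₂,
      mul_nonpos_of_nonpos_of_nonneg (by linarith : A * c₀ ^ 2 - At ≤ 0) (mul_self_nonneg t₂)]
  · rintro (hD | ⟨_, habs⟩)
    · set D := A * c₀ ^ 2 - At with hDdef
      set t₂ := Real.sqrt ((2 * A * c₀ ^ 2 + At) / (2 * D)) with ht₂
      have harg : 0 ≤ (2 * A * c₀ ^ 2 + At) / (2 * D) := by positivity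
      have hsq : t₂ ^ 2 = (2 * A * c₀ ^ 2 + At) / (2 * D) := Real.sq_sqrt harg
      refine ⟨t₂ * D / (2 * c₀), t₂, ?_, ?_⟩
      · field_simp
        ring
      · have h : t₂ ^ 2 * (2 * D) = 2 * A * c₀ ^ 2 + At := by
          rw [hsq]; field_simp
        field_simp
        nlinarith [h]
    · exact absurd habs (ne_of_gt hpos)
end
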